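/- arXiv:2006.04717 — 2 statements merged into one kernel-verified Lean document; each statement's English description precedes it below -/
import Mathlib

section
/- Let A and B be groups, let i : C → A and j : C → B be injective homomorphisms with j(C) of index 2 in B, and let G = A *_C B be the corresponding amalgamated free product. Fix g ∈ B ∖ j(C) and let β : C → C be the automorphism with j(β(h)) = g⁻¹ j(h) g for all h ∈ C. Let φ : G → B/j(C) ≅ ℤ/2ℤ be the homomorphism that is trivial on A and is the quotient map on B. Then the kernel of φ is a subgroup of index 2 in G isomorphic to the twisted double D(A, C, β). -/
/-- A family of two groups indexed by `Bool`. -/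
def twoFam (A B : Type) : Bool → Type := fun b => bif b then A else B

instance twoFamGroup {A B : Type} [Group A] [Group B] : ∀ b, Group (twoFam A B b) :=
  fun b => match b with
  | false => (inferInstance : Group B)
  | true => (inferInstance : Group A)

/-- The pair of maps from `C` into the two-element family of groups, packaging
homomorphisms `i : C →* A` and `j : C →* B`. -/
def twoMaps {A B C : Type} [Group A] [Group B] [Group C] (i : C →* A) (j : C →* B) :
    ∀ b, C →* twoFam A B b := fun b => match b with
  | false => j
  | true => i

/-- The amalgamated free product `A *_C B` (pushout) along `i : C →* A` and `j : C →* B`. -/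
abbrev AmalgamatedProduct {A B C : Type} [Group A] [Group B] [Group C]
    (i : C →* A) (j : C →* B) : Type :=
  Monoid.PushoutI (twoMaps i j)

/-!
Write `G = A *_C B`, `K = ker Φ` and `D = D(A, C, β)`. Since `g⁻¹ j(c) g = j(β c)`, the maps
`a ↦ a` and `a ↦ g a g⁻¹` agree on `C` in the way the twisted double prescribes, giving
`ψ : D → K`. Conjugation by `g` preserves `ψ(D)` (it is `ψ` composed with the automorphism `σ` of
`D` swapping the two factors) and `g² = j(c₀)` lies in `ψ(D)`, so `ψ(D) ∪ ψ(D) g` is closed under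
multiplication; it contains `A` and `B`, hence is `G`, and so `ψ(D) = K`.

For injectivity, let `G` act on `D ⊕ D`, thought of as `K ⊔ K g`: `A` by left multiplication and
`g` by the permutation `τ` built from `σ`. Because `j(C)` has index two in `B`, the relations
`τ c τ⁻¹ = g c g⁻¹` and `τ² = c₀` suffice to extend this to an action of `B`. Composed with `ψ`, the
action is the left regular action of `D`, which is faithful.
-/

open Function Monoid

namespace AmalgamatedProduct

variable {A B C : Type} [Group A] [Group B] [Group C] (i : C →* A) (j : C →* B)

def inl : A →* AmalgamatedProduct i j := PushoutI.of (φ := twoMaps i j) true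

def inr : B →* AmalgamatedProduct i j := PushoutI.of (φ := twoMaps i j) false

variable {i j}

theorem inl_apply_eq_inr_apply (c : C) : inl i j (i c) = inr i j (j c) :=
  (PushoutI.of_apply_eq_base (twoMaps i j) true c).trans
    (PushoutI.of_apply_eq_base (twoMaps i j) false c).symm

def lift {K : Type*} [Group K] (f : A →* K) (f' : B →* K) (h : ∀ c, f (i c) = f' (j c)) :
    AmalgamatedProduct i j →* K :=
  PushoutI.lift (fun b => match b with | true => f | false => f') (f.comp i) fun b => by
    cases b
    · ext c
      exact (h c).symm
    · rfl

section lift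

variable {K : Type*} [Group K] (f : A →* K) (f' : B →* K) (h : ∀ c, f (i c) = f' (j c))

@[simp]
theorem lift_inl (a : A) : lift f f' h (inl i j a) = f a := PushoutI.lift_of _ _ _ _

@[simp]
theorem lift_inr (b : B) : lift f f' h (inr i j b) = f' b := PushoutI.lift_of _ _ _ _

end lift

theorem hom_ext {K : Type*} [Group K] {φ ψ : AmalgamatedProduct i j →* K}
    (hinl : ∀ a, φ (inl i j a) = ψ (inl i j a)) (hinr : ∀ b, φ (inr i j b) = ψ (inr i j b)) :
    φ = ψ :=
  PushoutI.hom_ext_nonempty fun b => by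
    cases b
    exacts [MonoidHom.ext hinr, MonoidHom.ext hinl]

theorem induction_on {motive : AmalgamatedProduct i j → Prop} (x : AmalgamatedProduct i j)
    (hinl : ∀ a, motive (inl i j a)) (hinr : ∀ b, motive (inr i j b))
    (mul : ∀ x y, motive x → motive y → motive (x * y)) : motive x :=
  PushoutI.induction_on x (fun b => by cases b; exacts [hinr, hinl])
    (fun c => PushoutI.of_apply_eq_base (twoMaps i j) true c ▸ hinl (i c)) mul

end AmalgamatedProduct

theorem Subgroup.mul_inv_mem_of_index_two {G : Type*} [Group G] {H : Subgroup G}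
    (hidx : H.index = 2) {a b : G} (ha : a ∉ H) (hb : b ∉ H) : a * b⁻¹ ∈ H := by
  rw [Subgroup.mul_mem_iff_of_index_two hidx, Subgroup.inv_mem_iff]
  exact iff_of_false ha hb

theorem MonoidHom.exists_extend_of_index_two {B C P : Type*} [Group B] [Group C] [Group P]
    {j : C →* B} (hj : Injective j) (hidx : j.range.index = 2) {g : B} (hg : g ∉ j.range)
    {γ : C → C} (hγ : ∀ c, j (γ c) = g * j c * g⁻¹) {c₀ : C} (hc₀ : j c₀ = g * g)
    (f : C →* P) (τ : P) (hτf : ∀ c, τ * f c = f (γ c) * τ) (hτ : τ * τ = f c₀) :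
    ∃ ρ : B →* P, (∀ c, ρ (j c) = f c) ∧ ρ g = τ := by
  have hmem : ∀ b ∉ j.range, b * g⁻¹ ∈ j.range := fun b hb =>
    j.range.mul_inv_mem_of_index_two hidx hb hg
  classical
  let ρ : B → P := fun b =>
    if hb : b ∈ j.range then f hb.choose else f (hmem b hb).choose * τ
  have hρ : ∀ c, ρ (j c) = f c := fun c => by
    have hc : j c ∈ j.range := ⟨c, rfl⟩
    simp only [ρ, dif_pos hc, hj hc.choose_spec]
  have hρg : ∀ c, ρ (j c * g) = f c * τ := fun c => by
    have hc : j c * g ∉ j.range := fun h => hg <| by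
      simpa using j.range.mul_mem (j.range.inv_mem ⟨c, rfl⟩) h
    have hc' : j (hmem _ hc).choose = j c :=
      (hmem _ hc).choose_spec.trans (mul_inv_cancel_right _ _)
    simp only [ρ, dif_neg hc, hj hc']
  have hcoset : ∀ b, ∃ c, b = j c ∨ b = j c * g := fun b => by
    by_cases hb : b ∈ j.range
    · obtain ⟨c, rfl⟩ := hb
      exact ⟨c, .inl rfl⟩
    · obtain ⟨c, hc⟩ := hmem b hb
      exact ⟨c, .inr (by rw [hc, inv_mul_cancel_right])⟩
  refine ⟨MonoidHom.mk' ρ fun b b' => ?_, hρ, by simpa using hρg 1⟩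
  obtain ⟨c, rfl | rfl⟩ := hcoset b <;> obtain ⟨c', rfl | rfl⟩ := hcoset b'
  · rw [← map_mul, hρ, hρ, hρ, map_mul]
  · rw [← mul_assoc, ← map_mul, hρg, hρ, hρg, map_mul, mul_assoc]
  · rw [show j c * g * j c' = j (c * γ c') * g by rw [map_mul, hγ]; group,
      hρg, hρ, hρg, map_mul, mul_assoc, mul_assoc, hτf]
  · rw [show j c * g * (j c' * g) = j (c * γ c' * c₀) by rw [map_mul, map_mul, hγ, hc₀]; group,
      hρ, hρg, hρg, map_mul, map_mul, ← hτ, mul_assoc, mul_assoc, ← mul_assoc τ, hτf, mul_assoc]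

theorem MonoidHom.index_ker_eq_card_of_prime_card {G Q : Type*} [Group G] [Group Q]
    [Fact (Nat.card Q).Prime] (Φ : G →* Q) (hΦ : Φ ≠ 1) : Φ.ker.index = Nat.card Q := by
  rw [Subgroup.index_ker, Φ.range.eq_bot_or_eq_top_of_prime_card.resolve_left
    (fun h => hΦ (MonoidHom.range_eq_bot_iff.mp h)), Subgroup.card_top]

theorem Subgroup.mul_mem_or_mul_mul_inv_mem {G : Type*} [Group G] {K : Subgroup G} {t : G}
    (hconj : ∀ k ∈ K, t * k * t⁻¹ ∈ K) (ht : t * t ∈ K) {x y : G}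
    (hx : x ∈ K ∨ x * t⁻¹ ∈ K) (hy : y ∈ K ∨ y * t⁻¹ ∈ K) : x * y ∈ K ∨ x * y * t⁻¹ ∈ K := by
  rcases hx with hx | hx <;> rcases hy with hy | hy
  · exact .inl (K.mul_mem hx hy)
  · exact .inr (by simpa only [mul_assoc] using K.mul_mem hx hy)
  · exact .inr (by simpa [mul_assoc] using K.mul_mem hx (hconj y hy))
  · exact .inl (by simpa [mul_assoc] using K.mul_mem (K.mul_mem hx (hconj _ hy)) ht)

namespace AmalgamatedProduct

section TwistedDouble

variable {A C : Type} [Group A] [Group C] (i : C →* A) {β : C →* C} {c₀ : C}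

local notation "D" => AmalgamatedProduct i (i.comp β)
local notation "ι₁" => inl i (i.comp β)
local notation "ι₂" => inr i (i.comp β)

def swapFactors (hβ₀ : β c₀ = c₀) (hβ₂ : ∀ c, β (β c) = c₀⁻¹ * c * c₀) : D →* D :=
  lift ι₂ ((MulAut.conj (ι₁ (i c₀))).toMonoidHom.comp ι₁) fun c => by
    change ι₂ (i c) = ι₁ (i c₀) * ι₁ (i (β c)) * (ι₁ (i c₀))⁻¹
    simp only [inl_apply_eq_inr_apply, MonoidHom.comp_apply, hβ₀, hβ₂, ← map_inv, ← map_mul]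
    congr 2
    group

variable (hβ₀ : β c₀ = c₀) (hβ₂ : ∀ c, β (β c) = c₀⁻¹ * c * c₀)

@[simp]
theorem swapFactors_inl (a : A) : swapFactors i hβ₀ hβ₂ (ι₁ a) = ι₂ a := lift_inl _ _ _ a

@[simp]
theorem swapFactors_inr (a : A) :
    swapFactors i hβ₀ hβ₂ (ι₂ a) = ι₁ (i c₀) * ι₁ a * (ι₁ (i c₀))⁻¹ :=
  lift_inr _ _ _ a

theorem swapFactors_inl_apply (c : C) :
    swapFactors i hβ₀ hβ₂ (ι₁ (i c)) = ι₁ (i (c₀ * β c * c₀⁻¹)) := by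
  rw [swapFactors_inl, inl_apply_eq_inr_apply, MonoidHom.comp_apply]
  congr 2
  rw [map_mul, map_mul, map_inv, hβ₀, hβ₂]
  group

theorem swapFactors_inl_apply_self : swapFactors i hβ₀ hβ₂ (ι₁ (i c₀)) = ι₁ (i c₀) := by
  rw [swapFactors_inl_apply, hβ₀, mul_inv_cancel_right]

theorem swapFactors_swapFactors (d : D) :
    swapFactors i hβ₀ hβ₂ (swapFactors i hβ₀ hβ₂ d) = ι₁ (i c₀) * d * (ι₁ (i c₀))⁻¹ := by
  suffices (swapFactors i hβ₀ hβ₂).comp (swapFactors i hβ₀ hβ₂) =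
      (MulAut.conj (ι₁ (i c₀))).toMonoidHom from DFunLike.congr_fun this d
  refine hom_ext (fun a => ?_) (fun a => ?_)
  · simp
  · rw [MonoidHom.comp_apply, swapFactors_inr, map_mul, map_mul, map_inv,
      swapFactors_inl_apply_self, swapFactors_inl]
    rfl

theorem swapFactors_bijective : Bijective (swapFactors i hβ₀ hβ₂) := by
  have h : Bijective (swapFactors i hβ₀ hβ₂ ∘ swapFactors i hβ₀ hβ₂) := by
    convert (MulAut.conj (ι₁ (i c₀))).bijective using 1
    ext d
    exact swapFactors_swapFactors i hβ₀ hβ₂ d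
  exact ⟨h.injective.of_comp, h.surjective.of_comp⟩

/-- Left multiplication by `g` on `K ⊔ K g`, read through `Sum.inl d ↦ ψ d` and
`Sum.inr d ↦ ψ d * g`, where `ψ = ofTwistedDouble` and `c₀` plays the role of `g²`. -/
noncomputable def swapPerm : Equiv.Perm (D ⊕ D) :=
  let σ := Equiv.ofBijective _ (swapFactors_bijective i hβ₀ hβ₂)
  (Equiv.sumCongr σ (σ.trans (Equiv.mulRight (ι₁ (i c₀))))).trans (Equiv.sumComm D D)

@[simp]
theorem swapPerm_inl (d : D) : swapPerm i hβ₀ hβ₂ (.inl d) = .inr (swapFactors i hβ₀ hβ₂ d) :=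
  rfl

@[simp]
theorem swapPerm_inr (d : D) :
    swapPerm i hβ₀ hβ₂ (.inr d) = .inl (swapFactors i hβ₀ hβ₂ d * ι₁ (i c₀)) := rfl

theorem swapPerm_mul_toPerm (x : D) :
    swapPerm i hβ₀ hβ₂ * MulAction.toPerm x =
      MulAction.toPerm (swapFactors i hβ₀ hβ₂ x) * swapPerm i hβ₀ hβ₂ := by
  ext (d | d) <;> simp [mul_assoc]

theorem swapPerm_mul_self :
    swapPerm i hβ₀ hβ₂ * swapPerm i hβ₀ hβ₂ = MulAction.toPerm (ι₁ (i c₀)) := by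
  ext (d | d) <;>
    simp [-swapFactors_inl, swapFactors_swapFactors, swapFactors_inl_apply_self, mul_assoc]

end TwistedDouble

section KernelOfIndexTwo

variable {A B C : Type} [Group A] [Group B] [Group C] {i : C →* A} {j : C →* B} {β : C →* C}
  {g : B} {c₀ : C}

local notation "D" => AmalgamatedProduct i (i.comp β)
local notation "ι₁" => inl i (i.comp β)
local notation "ι₂" => inr i (i.comp β)

variable (i j g) in
def ofTwistedDouble (hβ : ∀ c, j (β c) = g⁻¹ * j c * g) : D →* AmalgamatedProduct i j :=
  lift (inl i j) ((MulAut.conj (inr i j g)).toMonoidHom.comp (inl i j)) fun c => by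
    change inl i j (i c) = inr i j g * inl i j (i (β c)) * (inr i j g)⁻¹
    rw [inl_apply_eq_inr_apply, inl_apply_eq_inr_apply, hβ, ← map_inv, ← map_mul, ← map_mul]
    group

variable (hβ : ∀ c, j (β c) = g⁻¹ * j c * g)

@[simp]
theorem ofTwistedDouble_inl (a : A) : ofTwistedDouble i j g hβ (ι₁ a) = inl i j a :=
  lift_inl _ _ _ a

@[simp]
theorem ofTwistedDouble_inr (a : A) :
    ofTwistedDouble i j g hβ (ι₂ a) = inr i j g * inl i j a * (inr i j g)⁻¹ :=
  lift_inr _ _ _ a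

variable (hc₀ : j c₀ = g * g) (hβ₀ : β c₀ = c₀) (hβ₂ : ∀ c, β (β c) = c₀⁻¹ * c * c₀)
include hc₀

theorem inl_apply_eq_inr_sq : inl i j (i c₀) = inr i j g * inr i j g := by
  rw [inl_apply_eq_inr_apply, hc₀, map_mul]

theorem ofTwistedDouble_swapFactors (d : D) :
    ofTwistedDouble i j g hβ (swapFactors i hβ₀ hβ₂ d) =
      inr i j g * ofTwistedDouble i j g hβ d * (inr i j g)⁻¹ := by
  suffices (ofTwistedDouble i j g hβ).comp (swapFactors i hβ₀ hβ₂) =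
      (MulAut.conj (inr i j g)).toMonoidHom.comp (ofTwistedDouble i j g hβ) from
    DFunLike.congr_fun this d
  refine hom_ext (fun a => ?_) (fun a => ?_)
  · simp
  · simp [inl_apply_eq_inr_sq hc₀]
    group

include hβ₀ hβ₂ in
theorem mem_range_ofTwistedDouble_or (hidx : j.range.index = 2) (hg : g ∉ j.range)
    (x : AmalgamatedProduct i j) :
    x ∈ (ofTwistedDouble i j g hβ).range ∨
      x * (inr i j g)⁻¹ ∈ (ofTwistedDouble i j g hβ).range := by
  have hinl : ∀ a, inl i j a ∈ (ofTwistedDouble i j g hβ).range := fun a => ⟨ι₁ a, by simp⟩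
  induction x using induction_on with
  | hinl a => exact .inl (hinl a)
  | hinr b =>
    rw [← map_inv, ← map_mul]
    by_cases hb : b ∈ j.range
    · obtain ⟨c, rfl⟩ := hb
      left
      rw [← inl_apply_eq_inr_apply]
      exact hinl (i c)
    · obtain ⟨c, hc⟩ := j.range.mul_inv_mem_of_index_two hidx hb hg
      right
      rw [← hc, ← inl_apply_eq_inr_apply]
      exact hinl (i c)
  | mul x y hx hy =>
    refine Subgroup.mul_mem_or_mul_mul_inv_mem ?_ ?_ hx hy
    · rintro _ ⟨d, rfl⟩
      exact ⟨_, ofTwistedDouble_swapFactors hβ hc₀ hβ₀ hβ₂ d⟩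
    · rw [← inl_apply_eq_inr_sq hc₀]
      exact hinl (i c₀)

include hβ₀ hβ₂ in
theorem range_ofTwistedDouble_eq_ker {Q : Type*} [Group Q] (hidx : j.range.index = 2)
    (hg : g ∉ j.range) (Φ : AmalgamatedProduct i j →* Q) (hΦA : ∀ a, Φ (inl i j a) = 1)
    (hΦg : Φ (inr i j g) ≠ 1) : (ofTwistedDouble i j g hβ).range = Φ.ker := by
  have hΦψ : Φ.comp (ofTwistedDouble i j g hβ) = 1 :=
    hom_ext (fun a => by simp [hΦA]) (fun a => by simp [hΦA])
  refine le_antisymm ?_ fun x hx => ?_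
  · rintro _ ⟨d, rfl⟩
    exact DFunLike.congr_fun hΦψ d
  · refine (mem_range_ofTwistedDouble_or hβ hc₀ hβ₀ hβ₂ hidx hg x).resolve_right ?_
    rintro ⟨d, hd⟩
    rw [eq_mul_inv_iff_mul_eq] at hd
    rw [← hd, MonoidHom.mem_ker, map_mul, ← MonoidHom.comp_apply, hΦψ, MonoidHom.one_apply,
      one_mul] at hx
    exact hΦg hx

include hβ₀ hβ₂ in
theorem ofTwistedDouble_injective (hj : Injective j) (hidx : j.range.index = 2)
    (hg : g ∉ j.range) : Injective (ofTwistedDouble i j g hβ) := by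
  obtain ⟨ρ, hρj, hρg⟩ := MonoidHom.exists_extend_of_index_two hj hidx hg
    (γ := fun c => c₀ * β c * c₀⁻¹) (fun c => by rw [map_mul, map_mul, map_inv, hc₀, hβ]; group)
    hc₀ ((MulAction.toPermHom D (D ⊕ D)).comp ((inl i (i.comp β)).comp i)) (swapPerm i hβ₀ hβ₂)
    (fun c => by
      simp only [MonoidHom.comp_apply, MulAction.toPermHom_apply, swapPerm_mul_toPerm,
        swapFactors_inl_apply])
    (by simp [swapPerm_mul_self])
  let Θ := lift (i := i) (j := j) ((MulAction.toPermHom D (D ⊕ D)).comp ι₁) ρ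
    fun c => (hρj c).symm
  have hΘψ : Θ.comp (ofTwistedDouble i j g hβ) = MulAction.toPermHom D (D ⊕ D) := by
    refine hom_ext (fun a => by simp [Θ]) (fun a => ?_)
    simp [Θ, hρg, swapPerm_mul_toPerm]
  have hinj : Injective (Θ ∘ ofTwistedDouble i j g hβ) := by
    rw [← MonoidHom.coe_comp, hΘψ]
    exact MulAction.toPerm_injective
  exact hinj.of_comp

end KernelOfIndexTwo

end AmalgamatedProduct

open AmalgamatedProduct in
theorem amalgam_index_two_kernel_is_twisted_double_general
    (A B C : Type) [Group A] [Group B] [Group C]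
    (i : C →* A) (j : C →* B) (hj : Function.Injective j)
    (hidx : j.range.index = 2) (g : B) (hg : g ∉ j.range)
    (β : C ≃* C) (hβ : ∀ h : C, j (β h) = g⁻¹ * j h * g)
    (Φ : AmalgamatedProduct i j →* Multiplicative (ZMod 2))
    (hΦA : ∀ a : A, Φ (Monoid.PushoutI.of (φ := twoMaps i j) true a) = 1)
    (hΦB : ∀ b : B, Φ (Monoid.PushoutI.of (φ := twoMaps i j) false b) = 1 ↔ b ∈ j.range) :
    Φ.ker.index = 2 ∧
    Nonempty (Φ.ker ≃* AmalgamatedProduct i (i.comp β.toMonoidHom)) := by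
  obtain ⟨c₀, hc₀⟩ := Subgroup.mul_self_mem_of_index_two hidx g
  have hβ₀ : β c₀ = c₀ := hj (by rw [hβ, hc₀]; group)
  have hβ₂ : ∀ c, β (β c) = c₀⁻¹ * c * c₀ := fun c =>
    hj (by rw [hβ, hβ, map_mul, map_mul, map_inv, hc₀]; group)
  have hΦg : Φ (inr i j g) ≠ 1 := fun h => hg ((hΦB g).1 h)
  have : Fact (Nat.card (Multiplicative (ZMod 2))).Prime := ⟨by simpa using Nat.prime_two⟩
  refine ⟨(Φ.index_ker_eq_card_of_prime_card fun h => hΦg (by simp [h])).trans (by simp), ?_⟩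
  have hinj := ofTwistedDouble_injective (i := i) (β := β.toMonoidHom) hβ hc₀ hβ₀ hβ₂ hj hidx hg
  have hrange := range_ofTwistedDouble_eq_ker (β := β.toMonoidHom) hβ hc₀ hβ₀ hβ₂ hidx hg Φ hΦA hΦg
  exact ⟨((MonoidHom.ofInjective hinj).trans (MulEquiv.subgroupCongr hrange)).symm⟩

theorem amalgam_index_two_kernel_is_twisted_double
    (A B C : Type) [Group A] [Group B] [Group C]
    (i : C →* A) (j : C →* B) (hi : Function.Injective i) (hj : Function.Injective j)
    (hidx : j.range.index = 2) (g : B) (hg : g ∉ j.range)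
    (β : C ≃* C) (hβ : ∀ h : C, j (β h) = g⁻¹ * j h * g)
    (Φ : AmalgamatedProduct i j →* Multiplicative (ZMod 2))
    (hΦA : ∀ a : A, Φ (Monoid.PushoutI.of (φ := twoMaps i j) true a) = 1)
    (hΦB : ∀ b : B, Φ (Monoid.PushoutI.of (φ := twoMaps i j) false b) = 1 ↔ b ∈ j.range) :
    Φ.ker.index = 2 ∧
    Nonempty (Φ.ker ≃* AmalgamatedProduct i (i.comp β.toMonoidHom)) :=
  amalgam_index_two_kernel_is_twisted_double_general A B C i j hj hidx g hg β hβ Φ hΦA hΦB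
end

section
/- Let Γ be a finite simple graph with each edge labelled by an integer ≥ 2, equipped with a partial orientation ι defined exactly on the edges with label ≥ 3. Let Γ' be the simple graph with vertex set V(Γ) × {+,−} which, for each edge {a,b} of Γ, has the edges {a₊,b₋} and {a₋,b₊}. Let Δ be the subgraph of Γ' consisting of: the edge {a₊,b₋} for each edge e = {a,b} with label ≥ 3 and ι(e) = a, and both edges {a₊,b₋} and {a₋,b₊} for each edge {a,b} with label 2. Then Δ contains no cycle (i.e. Δ is a forest) if and only if Γ contains no misdirected cycle of even length and no cycle all of whose edges are labelled 2. -/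
/-!
Lifting a cycle `c` of `Γ` to `Δ` amounts to choosing signs `s i`; they must alternate, so the
length is even, and the lifted edge `{(c i, s i), (c (i+1), !s i)}` lies in `Δ` exactly when the
orientation of the `i`-th edge read off from `s i` (from `c i` to `c (i+1)` iff `s i`) agrees
with `ι`. Hence the cycles of `Δ` are the misdirected even cycles of `Γ`. A cycle labelled 2
throughout carries no orientation, so running around it twice is a misdirected even cycle; the
second condition therefore follows from the first. Finally, closed walks without backtracking
exist exactly in graphs that are not forests, since in a forest such a walk is a path.
-/

/-- `c : ZMod n → V` is a cycle in `Γ`: a closed walk with no backtracking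
(a combinatorial immersion of the `n`-cycle); it need not be embedded. -/
structure SimpleGraph.IsCycleMap {V : Type} (Γ : SimpleGraph V) {n : ℕ} (c : ZMod n → V) :
    Prop where
  adj : ∀ i, Γ.Adj (c i) (c (i + 1))
  no_backtrack : ∀ i, c (i + 2) ≠ c i

/-- The cycle `c : ZMod n → V` is a misdirected cycle of even length with respect to the
partial orientation `D` (where `D a b` means the edge `{a,b}` is oriented with initial
vertex `a`): the partial orientation induced on its edges extends to a full orientation
(recorded by `s i = true` iff the `i`-th edge points from `c i` to `c (i+1)`) in which
every maximal directed subpath has length 1, i.e. the directions alternate. -/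
def MisdirectedEvenCycle {V : Type} (Γ : SimpleGraph V) (D : V → V → Prop)
    (n : ℕ) (c : ZMod n → V) : Prop :=
  Even n ∧ Γ.IsCycleMap c ∧ ∃ s : ZMod n → Bool,
    (∀ i, s (i + 1) = !(s i)) ∧
    (∀ i, (D (c i) (c (i + 1)) → s i = true) ∧ (D (c (i + 1)) (c i) → s i = false))

/-- The subgraph `Δ` of the bipartite double cover `Γ'` of `Γ` (on vertex set `V × Bool`,
with `a₊ = (a, true)` and `a₋ = (a, false)`): it contains the edge `{a₊, b₋}` whenever
`D a b` holds (the edge `{a,b}` has label ≥ 3 and initial vertex `a`) or `M a b = 2`,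
for each edge `{a,b}` of `Γ`. -/
def collapsedGraph {V : Type} (Γ : SimpleGraph V) (M : V → V → ℕ) (D : V → V → Prop)
    (hsymm : ∀ a b, M a b = M b a) : SimpleGraph (V × Bool) where
  Adj x y := Γ.Adj x.1 y.1 ∧
    ((x.2 = true ∧ y.2 = false ∧ (D x.1 y.1 ∨ M x.1 y.1 = 2)) ∨
     (x.2 = false ∧ y.2 = true ∧ (D y.1 x.1 ∨ M x.1 y.1 = 2)))
  symm := by
    constructor
    rintro ⟨a, s⟩ ⟨b, t⟩ ⟨h1, h2⟩
    refine ⟨h1.symm, ?_⟩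
    rcases h2 with ⟨hs, ht, hd⟩ | ⟨hs, ht, hd⟩
    · exact Or.inr ⟨ht, hs, by rw [hsymm b a]; exact hd⟩
    · exact Or.inl ⟨ht, hs, by rw [hsymm b a]; exact hd⟩
  loopless := by
    constructor
    rintro ⟨a, s⟩ ⟨h1, _⟩
    exact Γ.loopless.irrefl a h1

theorem ZMod.exists_forall_add_one_eq_not_iff {n : ℕ} :
    (∃ s : ZMod n → Bool, ∀ i, s (i + 1) = !s i) ↔ Even n := by
  constructor
  · rintro ⟨s, hs⟩
    have hparity : ∀ k : ℕ, s k = (s 0 ^^ decide (Odd k)) := by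
      intro k
      induction k with
      | zero => simp
      | succ k ih => rw [Nat.cast_succ, hs, ih]; simp [Nat.odd_add_one, ← Nat.not_even_iff_odd]
    by_contra hodd
    simpa [Nat.not_even_iff_odd.1 hodd] using hparity n
  · intro hn
    refine ⟨fun i => decide (ZMod.castHom (even_iff_two_dvd.1 hn) (ZMod 2) i = 1), fun i => ?_⟩
    simp only [map_add, map_one]
    generalize ZMod.castHom _ (ZMod 2) i = x
    revert x
    decide

namespace SimpleGraph

variable {V : Type} {G : SimpleGraph V}

theorem IsAcyclic.isPath_of_getVert_add_two_ne (hG : G.IsAcyclic) {u v : V} (p : G.Walk u v)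
    (hp : ∀ i, i + 2 ≤ p.length → p.getVert (i + 2) ≠ p.getVert i) : p.IsPath := by
  refine (hG.isPath_iff_isChain p).2 (List.isChain_iff_getElem.2 fun i hi heq => ?_)
  rw [Walk.getElem_edges, Walk.getElem_edges] at heq
  simp only [Walk.length_edges] at hi
  rcases Sym2.eq_iff.1 heq with ⟨hloop, -⟩ | ⟨hback, -⟩
  · exact (p.adj_getVert_succ (by omega)).ne hloop
  · exact hp i (by omega) hback.symm

theorem exists_walk_getVert_eq (f : ℕ → V) (hf : ∀ k, G.Adj (f k) (f (k + 1))) (n : ℕ) :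
    ∃ p : G.Walk (f 0) (f n), p.length = n ∧ ∀ k ≤ n, p.getVert k = f k := by
  induction n with
  | zero => exact ⟨.nil, rfl, fun k hk => by simp [Nat.le_zero.1 hk]⟩
  | succ n ih =>
    obtain ⟨p, hlen, hget⟩ := ih
    refine ⟨p.concat (hf n), by simp [hlen], fun k hk => ?_⟩
    rcases Nat.lt_or_ge k (n + 1) with hk' | hk'
    · rw [Walk.concat_eq_append, Walk.getVert_append', if_pos (by omega), hget k (by omega)]
    · obtain rfl : k = n + 1 := by omega
      simpa [hlen] using (p.concat (hf n)).getVert_length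

theorem IsCycleMap.not_isAcyclic {n : ℕ} (hn : 0 < n) {c : ZMod n → V} (hc : G.IsCycleMap c) :
    ¬ G.IsAcyclic := by
  intro hG
  obtain ⟨p, hlen, hget⟩ := exists_walk_getVert_eq (fun k : ℕ => c k)
    (fun k => by simpa using hc.adj k) n
  have hpath := hG.isPath_of_getVert_add_two_ne p fun i hi => by
    rw [hget _ (by omega), hget _ (by omega)]
    simpa using hc.no_backtrack i
  have hclosed : p.getVert n = p.getVert 0 := by simp [hget]
  have := hpath.getVert_injOn (by simp [hlen]) (by simp) hclosed
  omega

theorem Walk.getVert_mod_length {u : V} (p : G.Walk u u) {k : ℕ} (hk : k ≤ p.length) :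
    p.getVert (k % p.length) = p.getVert k := by
  rcases hk.lt_or_eq with hk | rfl
  · rw [Nat.mod_eq_of_lt hk]
  · simp

theorem exists_isCycleMap_of_not_isAcyclic (h : ¬ G.IsAcyclic) :
    ∃ n, 0 < n ∧ ∃ c : ZMod n → V, G.IsCycleMap c := by
  simp only [IsAcyclic, not_forall, not_not] at h
  obtain ⟨u, p, hp⟩ := h
  have h3 := hp.three_le_length
  have : NeZero p.length := ⟨by omega⟩
  refine ⟨p.length, by omega, fun i => p.getVert i.val, ⟨fun i => ?_, fun i heq => ?_⟩⟩
  · have hi := ZMod.val_lt i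
    have : (i + 1).val = (i.val + 1) % p.length := by
      rw [← ZMod.val_natCast, Nat.cast_add, ZMod.natCast_zmod_val, Nat.cast_one]
    simp only [this, p.getVert_mod_length (show i.val + 1 ≤ p.length by omega)]
    exact p.adj_getVert_succ hi
  · have hval := hp.getVert_injOn'
      (show (i + 2).val ≤ p.length - 1 by have := ZMod.val_lt (i + 2); omega)
      (show i.val ≤ p.length - 1 by have := ZMod.val_lt i; omega) heq
    have htwo : ((2 : ℕ) : ZMod p.length) = 0 := by
      simpa using ZMod.val_injective _ hval
    have := Nat.le_of_dvd two_pos ((ZMod.natCast_eq_zero_iff _ _).1 htwo)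
    omega

theorem isAcyclic_iff_forall_not_isCycleMap :
    G.IsAcyclic ↔ ∀ n, 0 < n → ∀ c : ZMod n → V, ¬ G.IsCycleMap c :=
  ⟨fun hG _ hn _ hc => hc.not_isAcyclic hn hG, fun h => by
    by_contra hG
    obtain ⟨n, hn, c, hc⟩ := exists_isCycleMap_of_not_isAcyclic hG
    exact h n hn c hc⟩

theorem IsCycleMap.comp_ringHom {m n : ℕ} {c : ZMod n → V} (hc : G.IsCycleMap c)
    (f : ZMod m →+* ZMod n) : G.IsCycleMap (c ∘ f) where
  adj i := by simpa using hc.adj (f i)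
  no_backtrack i := by simpa [map_ofNat f 2] using hc.no_backtrack (f i)

theorem IsCycleMap.misdirectedEvenCycle_two_mul {D : V → V → Prop} {n : ℕ} {c : ZMod n → V}
    (hc : G.IsCycleMap c) (hD : ∀ i, ¬ D (c i) (c (i + 1)) ∧ ¬ D (c (i + 1)) (c i)) :
    MisdirectedEvenCycle G D (2 * n) (c ∘ ZMod.castHom (dvd_mul_left n 2) (ZMod n)) := by
  obtain ⟨s, hs⟩ := ZMod.exists_forall_add_one_eq_not_iff.2 (even_two_mul n)
  refine ⟨even_two_mul n, hc.comp_ringHom _, s, hs, fun i => ?_⟩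
  simp only [Function.comp, map_add, map_one]
  exact ⟨fun h => ((hD _).1 h).elim, fun h => ((hD _).2 h).elim⟩

end SimpleGraph

section collapsedGraph

variable {V : Type} {Γ : SimpleGraph V} {M : V → V → ℕ} {D : V → V → Prop}
  {hsymm : ∀ a b, M a b = M b a}

theorem collapsedGraph_adj_snd {x y : V × Bool} (h : (collapsedGraph Γ M D hsymm).Adj x y) :
    y.2 = !x.2 := by
  obtain ⟨-, ⟨hx, hy, -⟩ | ⟨hx, hy, -⟩⟩ := h <;> simp [hx, hy]

theorem collapsedGraph_adj_not_iff {a b : V} (s : Bool) (hab : Γ.Adj a b) (h2 : 2 ≤ M a b)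
    (hnotboth : ¬ (D a b ∧ D b a)) (hdef : (D a b ∨ D b a) ↔ 3 ≤ M a b) :
    (collapsedGraph Γ M D hsymm).Adj (a, s) (b, !s) ↔
      (D a b → s = true) ∧ (D b a → s = false) := by
  show Γ.Adj a b ∧ _ ↔ _
  cases s <;> by_cases hDab : D a b <;> by_cases hDba : D b a <;> simp_all <;> omega

theorem exists_isCycleMap_collapsedGraph_iff (h2 : ∀ a b, Γ.Adj a b → 2 ≤ M a b)
    (hnotboth : ∀ a b, ¬ (D a b ∧ D b a))
    (hdef : ∀ a b, Γ.Adj a b → ((D a b ∨ D b a) ↔ 3 ≤ M a b)) {n : ℕ} :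
    (∃ c : ZMod n → V × Bool, (collapsedGraph Γ M D hsymm).IsCycleMap c) ↔
      ∃ c : ZMod n → V, MisdirectedEvenCycle Γ D n c := by
  have hadj_iff {a b : V} (s : Bool) (hab : Γ.Adj a b) :=
    collapsedGraph_adj_not_iff (hsymm := hsymm) s hab (h2 a b hab) (hnotboth a b) (hdef a b hab)
  constructor
  · rintro ⟨c, hc⟩
    have hs i : (c (i + 1)).2 = !(c i).2 := collapsedGraph_adj_snd (hc.adj i)
    have hΓ i : Γ.Adj (c i).1 (c (i + 1)).1 := (hc.adj i).1
    refine ⟨fun i => (c i).1, ZMod.exists_forall_add_one_eq_not_iff.1 ⟨fun i => (c i).2, hs⟩,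
      ⟨hΓ, fun i h => hc.no_backtrack i (Prod.ext h ?_)⟩, fun i => (c i).2, hs,
      fun i => (hadj_iff _ (hΓ i)).1 ?_⟩
    · rw [show i + 2 = i + 1 + 1 by ring, hs, hs, Bool.not_not]
    · rw [← hs i]
      exact hc.adj i
  · rintro ⟨c, -, hc, s, hs, hcompat⟩
    refine ⟨fun i => (c i, s i), fun i => ?_,
      fun i h => hc.no_backtrack i (congrArg Prod.fst h)⟩
    simp only [hs]
    exact (hadj_iff _ (hc.adj i)).2 (hcompat i)

end collapsedGraph

theorem collapsedGraph_acyclic_iff_general {V : Type} (Γ : SimpleGraph V)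
    (M : V → V → ℕ) (hsymm : ∀ a b, M a b = M b a) (h2 : ∀ a b, Γ.Adj a b → 2 ≤ M a b)
    (D : V → V → Prop)
    (hnotboth : ∀ a b, ¬ (D a b ∧ D b a))
    (hdef : ∀ a b, Γ.Adj a b → ((D a b ∨ D b a) ↔ 3 ≤ M a b)) :
    (collapsedGraph Γ M D hsymm).IsAcyclic ↔
      ((∀ (n : ℕ), 0 < n → ∀ c : ZMod n → V, ¬ MisdirectedEvenCycle Γ D n c) ∧
       (∀ (n : ℕ), 0 < n → ∀ c : ZMod n → V, Γ.IsCycleMap c →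
          ¬ ∀ i, M (c i) (c (i + 1)) = 2)) := by
  have hmisdirected : (collapsedGraph Γ M D hsymm).IsAcyclic ↔
      ∀ n, 0 < n → ∀ c : ZMod n → V, ¬ MisdirectedEvenCycle Γ D n c := by
    simp only [SimpleGraph.isAcyclic_iff_forall_not_isCycleMap, ← not_exists,
      exists_isCycleMap_collapsedGraph_iff h2 hnotboth hdef]
  rw [hmisdirected]
  refine ⟨fun h => ⟨h, fun n hn c hc hM => h (2 * n) (by omega) _
    (hc.misdirectedEvenCycle_two_mul fun i => ?_)⟩, And.left⟩
  have hlabel := hdef _ _ (hc.adj i)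
  rw [hM i] at hlabel
  exact not_or.1 (mt hlabel.1 (by norm_num))

theorem collapsedGraph_acyclic_iff {V : Type} [Fintype V] (Γ : SimpleGraph V)
    (M : V → V → ℕ) (hsymm : ∀ a b, M a b = M b a) (h2 : ∀ a b, Γ.Adj a b → 2 ≤ M a b)
    (D : V → V → Prop) (hadj : ∀ a b, D a b → Γ.Adj a b)
    (hnotboth : ∀ a b, ¬ (D a b ∧ D b a))
    (hdef : ∀ a b, Γ.Adj a b → ((D a b ∨ D b a) ↔ 3 ≤ M a b)) :
    (collapsedGraph Γ M D hsymm).IsAcyclic ↔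
      ((∀ (n : ℕ), 0 < n → ∀ c : ZMod n → V, ¬ MisdirectedEvenCycle Γ D n c) ∧
       (∀ (n : ℕ), 0 < n → ∀ c : ZMod n → V, Γ.IsCycleMap c →
          ¬ ∀ i, M (c i) (c (i + 1)) = 2)) :=
  collapsedGraph_acyclic_iff_general Γ M hsymm h2 D hnotboth hdef
end
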